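/- Let G be a connected graph of order n containing two adjacent vertices x and y, each of degree at least 3, with N(x) ∩ N(y) = ∅. Then γ_{StR}(G) ≤ n − 2. -/

import Mathlib

namespace SimpleGraph

variable {V : Type*}

/-- The degree of a vertex (cardinality of its open neighborhood). -/
noncomputable def deg (G : SimpleGraph V) (v : V) : ℕ := (G.neighborSet v).ncard

/-- Maximum degree. -/
noncomputable def maxDeg [Fintype V] (G : SimpleGraph V) : ℕ :=
  Finset.univ.sup fun v => G.deg v

/-- A strong Roman dominating function: `f : V → {0,1,...,⌈Δ/2⌉+1}` such that every vertex
with value 0 has a neighbor `w` with `f w ≥ 2` and `f w ≥ 1 + ⌈|N(w) ∩ B₀|/2⌉`. -/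
def IsStRDF [Fintype V] (G : SimpleGraph V) (f : V → ℕ) : Prop :=
  (∀ v, f v ≤ (G.maxDeg + 1) / 2 + 1) ∧
  ∀ v, f v = 0 → ∃ w, G.Adj v w ∧ 2 ≤ f w ∧
    1 + ((G.neighborSet w ∩ {u | f u = 0}).ncard + 1) / 2 ≤ f w

/-- The strong Roman domination number. -/
noncomputable def gammaStR [Fintype V] (G : SimpleGraph V) : ℕ :=
  sInf {k | ∃ f, G.IsStRDF f ∧ ∑ v, f v = k}

/-- A Roman dominating function. -/
def IsRDF (G : SimpleGraph V) (f : V → ℕ) : Prop :=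
  (∀ v, f v ≤ 2) ∧ ∀ v, f v = 0 → ∃ w, G.Adj v w ∧ f w = 2

/-- The Roman domination number. -/
noncomputable def gammaR [Fintype V] (G : SimpleGraph V) : ℕ :=
  sInf {k | ∃ f, G.IsRDF f ∧ ∑ v, f v = k}

/-- A dominating set. -/
def IsDomSet (G : SimpleGraph V) (D : Set V) : Prop :=
  ∀ v ∉ D, ∃ w ∈ D, G.Adj v w

/-- The domination number. -/
noncomputable def gammaDom [Fintype V] (G : SimpleGraph V) : ℕ :=
  sInf {k | ∃ D : Set V, G.IsDomSet D ∧ D.ncard = k}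

end SimpleGraph

/-! Put `1 + ⌊deg/2⌋` on each end of the edge `xy`, `0` on the rest of `N(x) ∪ N(y)` and `1`
everywhere else. A zero vertex next to `x` is dominated by `x`, whose zero neighbours exclude `y`, so
there are at most `deg x - 1` of them and `1 + ⌈(deg x - 1)/2⌉ = 1 + ⌊deg x/2⌋`; symmetrically for `y`.
Since `N(x)` and `N(y)` are disjoint, the weight is `n + 2 - ⌈deg x/2⌉ - ⌈deg y/2⌉ ≤ n - 2`. -/

namespace SimpleGraph

variable {V : Type*} (G : SimpleGraph V)

lemma deg_eq_card_neighborFinset (v : V) [Fintype (G.neighborSet v)] :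
    G.deg v = (G.neighborFinset v).card :=
  Set.ncard_eq_toFinset_card' _

lemma deg_le_maxDeg [Fintype V] (v : V) : G.deg v ≤ G.maxDeg :=
  Finset.le_sup (f := G.deg) (Finset.mem_univ v)

lemma ncard_neighborSet_inter_lt_deg [Finite V] {w u : V} {s : Set V} (hwu : G.Adj w u)
    (hu : u ∉ s) : (G.neighborSet w ∩ s).ncard < G.deg w :=
  Set.ncard_lt_ncard ((Set.ssubset_iff_of_subset Set.inter_subset_left).2
    ⟨u, hwu, fun h => hu h.2⟩) (Set.toFinite _)

lemma gammaStR_le_sum [Fintype V] {f : V → ℕ} (hf : G.IsStRDF f) : G.gammaStR ≤ ∑ v, f v :=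
  Nat.sInf_le ⟨f, hf, rfl⟩

open Classical in
noncomputable def doubleStarFun (x y : V) (v : V) : ℕ :=
  if v = x then 1 + G.deg x / 2
  else if v = y then 1 + G.deg y / 2
  else if G.Adj x v ∨ G.Adj y v then 0
  else 1

variable {G} {x y : V}

lemma doubleStarFun_left : G.doubleStarFun x y x = 1 + G.deg x / 2 := by
  simp [doubleStarFun]

lemma doubleStarFun_right (hxy : G.Adj x y) : G.doubleStarFun x y y = 1 + G.deg y / 2 := by
  simp [doubleStarFun, hxy.ne.symm]

lemma doubleStarFun_eq_zero_iff {v : V} :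
    G.doubleStarFun x y v = 0 ↔ v ≠ x ∧ v ≠ y ∧ (G.Adj x v ∨ G.Adj y v) := by
  unfold doubleStarFun
  split_ifs <;> simp_all

lemma doubleStarFun_comm : G.doubleStarFun x y = G.doubleStarFun y x := by
  ext v
  unfold doubleStarFun
  split_ifs <;> simp_all

/-- `y` is a neighbour of `x` outside `B₀`, which absorbs the rounding up of `|N(x) ∩ B₀| / 2`. -/
lemma le_doubleStarFun_of_adj [Finite V] (hxy : G.Adj x y) :
    1 + ((G.neighborSet x ∩ {u | G.doubleStarFun x y u = 0}).ncard + 1) / 2 ≤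
      G.doubleStarFun x y x := by
  have hlt := G.ncard_neighborSet_inter_lt_deg (s := {u | G.doubleStarFun x y u = 0}) hxy
    (by simp [doubleStarFun_eq_zero_iff])
  rw [doubleStarFun_left]
  omega

theorem isStRDF_doubleStarFun [Fintype V] (hxy : G.Adj x y) (hx : 2 ≤ G.deg x)
    (hy : 2 ≤ G.deg y) : G.IsStRDF (G.doubleStarFun x y) := by
  refine ⟨fun v => ?_, fun v hv => ?_⟩
  · have := G.deg_le_maxDeg x
    have := G.deg_le_maxDeg y
    unfold doubleStarFun
    split_ifs <;> omega
  · obtain ⟨-, -, hvx | hvy⟩ := doubleStarFun_eq_zero_iff.1 hv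
    · refine ⟨x, hvx.symm, ?_, le_doubleStarFun_of_adj hxy⟩
      rw [doubleStarFun_left]
      omega
    · rw [doubleStarFun_comm]
      refine ⟨y, hvy.symm, ?_, le_doubleStarFun_of_adj hxy.symm⟩
      rw [doubleStarFun_left]
      omega

theorem sum_doubleStarFun_add_deg_add_deg [Fintype V] (hxy : G.Adj x y)
    (hN : Disjoint (G.neighborSet x) (G.neighborSet y)) :
    ∑ v, G.doubleStarFun x y v + G.deg x + G.deg y =
      Fintype.card V + 2 + G.deg x / 2 + G.deg y / 2 := by
  classical
  set s := G.neighborFinset x ∪ G.neighborFinset y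
  have hs : s.card = G.deg x + G.deg y := by
    rw [deg_eq_card_neighborFinset, deg_eq_card_neighborFinset]
    exact Finset.card_union_of_disjoint (Set.disjoint_toFinset.2 hN)
  have hin : ∑ v ∈ s, G.doubleStarFun x y v = G.doubleStarFun x y x + G.doubleStarFun x y y :=
    Finset.sum_eq_add_of_mem x y (by simp [s, hxy.symm]) (by simp [s, hxy]) hxy.ne
      fun v hv ⟨hvx, hvy⟩ => doubleStarFun_eq_zero_iff.2 ⟨hvx, hvy, by simpa [s] using hv⟩
  have hout : ∑ v ∈ sᶜ, G.doubleStarFun x y v = sᶜ.card := by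
    rw [Finset.card_eq_sum_ones]
    refine Finset.sum_congr rfl fun v hv => ?_
    simp only [s, Finset.mem_compl, Finset.mem_union, mem_neighborFinset, not_or] at hv
    have hvx : v ≠ x := by rintro rfl; exact hv.2 hxy.symm
    have hvy : v ≠ y := by rintro rfl; exact hv.1 hxy
    simp [doubleStarFun, hvx, hvy, hv.1, hv.2]
  rw [← Finset.sum_add_sum_compl s, hin, hout, Finset.card_compl, hs, doubleStarFun_left,
    doubleStarFun_right hxy]
  have := s.card_le_univ
  omega

end SimpleGraph

theorem stmt12_general {V : Type*} [Fintype V] (G : SimpleGraph V)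
    (x y : V) (hxy : G.Adj x y) (hx : 3 ≤ G.deg x) (hy : 3 ≤ G.deg y)
    (hN : G.neighborSet x ∩ G.neighborSet y = ∅) :
    G.gammaStR ≤ Fintype.card V - 2 := by
  have hf := G.isStRDF_doubleStarFun hxy (by omega) (by omega)
  have hsum := G.sum_doubleStarFun_add_deg_add_deg hxy (Set.disjoint_iff_inter_eq_empty.2 hN)
  have := G.gammaStR_le_sum hf
  omega

/-- If a connected graph `G` of order `n` has two adjacent vertices `x`, `y` of degree at
least 3 with `N(x) ∩ N(y) = ∅`, then `γ_{StR}(G) ≤ n − 2`. -/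
theorem stmt12 {V : Type*} [Fintype V] (G : SimpleGraph V) (hc : G.Connected)
    (x y : V) (hxy : G.Adj x y) (hx : 3 ≤ G.deg x) (hy : 3 ≤ G.deg y)
    (hN : G.neighborSet x ∩ G.neighborSet y = ∅) :
    G.gammaStR ≤ Fintype.card V - 2 :=
  stmt12_general G x y hxy hx hy hN
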